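/- arXiv:1702.05985 — 2 statements merged into one kernel-verified Lean document; each statement's English description precedes it below -/
import Mathlib

section
/- Continuous Fano's inequality: let (Θ, G) be a measurable space equipped with a probability measure ν, let (Ω, F) be a measurable space, and let (P_θ)_{θ∈Θ} and (Q_θ)_{θ∈Θ} be families of probability measures on (Ω, F) and (A_θ)_{θ∈Θ} a family of events of F, such that θ ↦ P_θ(A_θ), θ ↦ Q_θ(A_θ) and θ ↦ KL(P_θ, Q_θ) are measurable, with KL(P_θ, Q_θ) finite and ν-integrable. If 0 < ∫_Θ Q_θ(A_θ) dν(θ) < 1, then ∫_Θ P_θ(A_θ) dν(θ) ≤ ( ∫_Θ KL(P_θ, Q_θ) dν(θ) + log 2 ) / ( − log ∫_Θ Q_θ(A_θ) dν(θ) ). -/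
open MeasureTheory
open scoped ENNReal Classical

/-- The Kullback-Leibler divergence between two measures, with value `+∞`
when `P` is not absolutely continuous w.r.t. `Q` or when the log-likelihood
ratio is not integrable. -/
noncomputable def KLdiv {Ω : Type*} [MeasurableSpace Ω] (P Q : Measure Ω) : ℝ≥0∞ :=
  if P ≪ Q ∧ Integrable (fun ω => Real.log (P.rnDeriv Q ω).toReal) P
  then ENNReal.ofReal (∫ ω, Real.log (P.rnDeriv Q ω).toReal ∂P)
  else ⊤

/-!
Write `q̄ = ∫ Q_θ(A_θ) dν`. The Donsker–Varadhan bound for `(P_θ, Q_θ)` with the test function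
`log (1/q̄) · 1_{A_θ}` gives
`log (1/q̄) · P_θ(A_θ) - log (1 + (1/q̄ - 1) Q_θ(A_θ)) ≤ KL(P_θ, Q_θ)`.
Integrating in `θ` and applying Jensen's inequality to the concave `log`, the second term
integrates to at most `log (1 + (1/q̄ - 1) q̄) = log (2 - q̄) ≤ log 2`.
-/

open Real InformationTheory Set

section

variable {α : Type*} [MeasurableSpace α] {μ ν : Measure α}
  [IsProbabilityMeasure μ] [IsProbabilityMeasure ν]

lemma KLdiv_eq_klDiv : KLdiv μ ν = klDiv μ ν := by
  simp [KLdiv, klDiv_def, llr_def]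

lemma integral_llr_nonneg (hμν : μ ≪ ν)
    (h_int : Integrable (llr μ ν) μ) : 0 ≤ ∫ x, llr μ ν x ∂μ := by
  simpa using integral_llr_add_sub_measure_univ_nonneg hμν h_int

lemma toReal_klDiv_eq_integral_llr (hμν : μ ≪ ν)
    (h_int : Integrable (llr μ ν) μ) : (klDiv μ ν).toReal = ∫ x, llr μ ν x ∂μ := by
  simpa using toReal_klDiv hμν h_int

/-- The Donsker–Varadhan variational lower bound. -/
lemma integral_sub_log_integral_exp_le_toReal_klDiv
    (hμν : klDiv μ ν ≠ ∞) {f : α → ℝ} (hfμ : Integrable f μ)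
    (hfν : Integrable (fun x ↦ exp (f x)) ν) :
    ∫ x, f x ∂μ - log (∫ x, exp (f x) ∂ν) ≤ (klDiv μ ν).toReal := by
  obtain ⟨hac, h_int⟩ := klDiv_ne_top_iff.mp hμν
  have : IsProbabilityMeasure (ν.tilted f) := isProbabilityMeasure_tilted hfν
  have h_gibbs := integral_llr_nonneg (hac.trans (absolutelyContinuous_tilted hfν))
    (integrable_llr_tilted_right hac hfμ h_int hfν)
  rw [integral_llr_tilted_right hac hfμ hfν h_int] at h_gibbs
  rw [toReal_klDiv_eq_integral_llr hac h_int]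
  linarith

lemma mul_measureReal_sub_log_le_toReal_klDiv
    (hμν : klDiv μ ν ≠ ∞) {s : Set α} (hs : MeasurableSet s) {t : ℝ} (ht : 0 < t) :
    log t * μ.real s - log (1 + (t - 1) * ν.real s) ≤ (klDiv μ ν).toReal := by
  have h_exp : (fun x ↦ exp (s.indicator (fun _ ↦ log t) x)) =
      fun x ↦ 1 + s.indicator (fun _ ↦ t - 1) x := by
    ext x
    by_cases hx : x ∈ s <;> simp [hx, exp_log ht]
  have hfν : Integrable (fun x ↦ exp (s.indicator (fun _ ↦ log t) x)) ν := by
    rw [h_exp]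
    exact (integrable_const 1).add ((integrable_const _).indicator hs)
  have h := integral_sub_log_integral_exp_le_toReal_klDiv hμν
    ((integrable_const (log t)).indicator hs) hfν
  rw [h_exp, integral_add (integrable_const 1) ((integrable_const _).indicator hs),
    integral_indicator_const _ hs, integral_indicator_const _ hs] at h
  simpa [mul_comm] using h

end

section

variable {α : Type*} [MeasurableSpace α] {μ : Measure α} {f : α → ℝ} {a : ℝ}

lemma integral_log_le_log_integral [IsProbabilityMeasure μ] {g : α → ℝ}
    (hg_pos : ∀ᵐ x ∂μ, 0 < g x) (hg : Integrable g μ) (hlog : Integrable (fun x ↦ log (g x)) μ) :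
    ∫ x, log (g x) ∂μ ≤ log (∫ x, g x ∂μ) := by
  set m := ∫ x, g x ∂μ
  have hm : 0 < m := by
    rw [integral_pos_iff_support_of_nonneg_ae (hg_pos.mono fun _ hx ↦ hx.le) hg]
    refine pos_iff_ne_zero.mpr fun h0 ↦ ?_
    have h_false : ∀ᵐ x ∂μ, False := by
      filter_upwards [hg_pos, measure_eq_zero_iff_ae_notMem.mp h0] with x hx hx0
      exact hx0 hx.ne'
    exact h_false.exists.elim fun _ ↦ id
  -- tangent line of `log` at `m`
  have h_tangent : ∀ᵐ x ∂μ, log (g x) ≤ log m + g x / m - 1 := by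
    filter_upwards [hg_pos] with x hx
    have := log_le_sub_one_of_pos (div_pos hx hm)
    rw [log_div hx.ne' hm.ne'] at this
    linarith
  calc ∫ x, log (g x) ∂μ ≤ ∫ x, (log m + g x / m - 1) ∂μ :=
        integral_mono_ae hlog (((integrable_const _).add (hg.div_const m)).sub
          (integrable_const 1)) h_tangent
    _ = log m := by
        rw [integral_sub ?_ (integrable_const 1),
          integral_add (integrable_const _) (hg.div_const m), integral_div]
        · simp only [integral_const, probReal_univ, smul_eq_mul, one_mul]
          rw [div_self hm.ne']
          ring
        · exact (integrable_const _).add (hg.div_const m)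

lemma integrable_log_one_add_mul (hf : Integrable f μ) (hf_nonneg : 0 ≤ᵐ[μ] f) (ha : 0 ≤ a) :
    Integrable (fun x ↦ log (1 + a * f x)) μ := by
  have h_meas : AEMeasurable (fun x ↦ log (1 + a * f x)) μ :=
    measurable_log.comp_aemeasurable ((hf.aemeasurable.const_mul a).const_add 1)
  refine (hf.const_mul a).mono' h_meas.aestronglyMeasurable ?_
  filter_upwards [hf_nonneg] with x hx
  have h_one : 1 ≤ 1 + a * f x := le_add_of_nonneg_right (mul_nonneg ha hx)
  rw [norm_of_nonneg (log_nonneg h_one)]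
  linarith [log_le_sub_one_of_pos (zero_lt_one.trans_le h_one)]

lemma integral_log_one_add_mul_le [IsProbabilityMeasure μ] (hf : Integrable f μ)
    (hf_nonneg : 0 ≤ᵐ[μ] f) (ha : 0 ≤ a) :
    ∫ x, log (1 + a * f x) ∂μ ≤ log (1 + a * ∫ x, f x ∂μ) := by
  have h_pos : ∀ᵐ x ∂μ, 0 < 1 + a * f x :=
    hf_nonneg.mono fun _ hx ↦ add_pos_of_pos_of_nonneg one_pos (mul_nonneg ha hx)
  calc ∫ x, log (1 + a * f x) ∂μ ≤ log (∫ x, 1 + a * f x ∂μ) :=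
        integral_log_le_log_integral h_pos ((integrable_const 1).add (hf.const_mul a))
          (integrable_log_one_add_mul hf hf_nonneg ha)
    _ = log (1 + a * ∫ x, f x ∂μ) := by
        rw [integral_add (integrable_const 1) (hf.const_mul a), integral_const_mul]
        simp

end

lemma integrable_toReal_measure_apply {Θ Ω : Type*} [MeasurableSpace Θ] [MeasurableSpace Ω]
    {ν : Measure Θ} [IsFiniteMeasure ν] {P : Θ → Measure Ω} [∀ θ, IsProbabilityMeasure (P θ)]
    {A : Θ → Set Ω} (h : Measurable fun θ ↦ (P θ (A θ)).toReal) :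
    Integrable (fun θ ↦ (P θ (A θ)).toReal) ν :=
  .of_mem_Icc 0 1 h.aemeasurable (ae_of_all _ fun _ ↦ ⟨ENNReal.toReal_nonneg, measureReal_le_one⟩)

/-- Continuous Fano's inequality, for a family of pairs of distributions indexed
by a measurable parameter space equipped with a prior `ν`. -/
theorem fano_continuous {Θ Ω : Type*} [MeasurableSpace Θ] [MeasurableSpace Ω]
    (ν : Measure Θ) [IsProbabilityMeasure ν]
    (P Q : Θ → Measure Ω)
    [∀ θ, IsProbabilityMeasure (P θ)] [∀ θ, IsProbabilityMeasure (Q θ)]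
    (A : Θ → Set Ω) (hA : ∀ θ, MeasurableSet (A θ))
    (hPmeas : Measurable fun θ => (P θ (A θ)).toReal)
    (hQmeas : Measurable fun θ => (Q θ (A θ)).toReal)
    (hKLfin : ∀ θ, KLdiv (P θ) (Q θ) ≠ ⊤)
    (hKLint : Integrable (fun θ => (KLdiv (P θ) (Q θ)).toReal) ν)
    (hq0 : 0 < ∫ θ, (Q θ (A θ)).toReal ∂ν)
    (hq1 : (∫ θ, (Q θ (A θ)).toReal ∂ν) < 1) :
    (∫ θ, (P θ (A θ)).toReal ∂ν) ≤
      ((∫ θ, (KLdiv (P θ) (Q θ)).toReal ∂ν) + Real.log 2) /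
        (- Real.log (∫ θ, (Q θ (A θ)).toReal ∂ν)) := by
  set q := ∫ θ, (Q θ (A θ)).toReal ∂ν
  have hq_int := integrable_toReal_measure_apply (ν := ν) hQmeas
  have hq_nonneg : 0 ≤ᵐ[ν] fun θ ↦ (Q θ (A θ)).toReal :=
    ae_of_all _ fun _ ↦ ENNReal.toReal_nonneg
  have ha : 0 ≤ q⁻¹ - 1 := sub_nonneg.mpr ((one_le_inv₀ hq0).mpr hq1.le)
  have h_pointwise : ∀ θ, log q⁻¹ * (P θ (A θ)).toReal - log (1 + (q⁻¹ - 1) * (Q θ (A θ)).toReal)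
      ≤ (KLdiv (P θ) (Q θ)).toReal := fun θ ↦ by
    have h_fin := hKLfin θ
    rw [KLdiv_eq_klDiv] at h_fin ⊢
    exact mul_measureReal_sub_log_le_toReal_klDiv h_fin (hA θ) (inv_pos.mpr hq0)
  have h_integrated : log q⁻¹ * ∫ θ, (P θ (A θ)).toReal ∂ν
      - ∫ θ, log (1 + (q⁻¹ - 1) * (Q θ (A θ)).toReal) ∂ν
      ≤ ∫ θ, (KLdiv (P θ) (Q θ)).toReal ∂ν := by
    have hp_int := (integrable_toReal_measure_apply (ν := ν) hPmeas).const_mul (log q⁻¹)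
    have hlog_int := integrable_log_one_add_mul hq_int hq_nonneg ha
    rw [← integral_const_mul, ← integral_sub hp_int hlog_int]
    exact integral_mono (hp_int.sub hlog_int) hKLint h_pointwise
  have h_jensen : ∫ θ, log (1 + (q⁻¹ - 1) * (Q θ (A θ)).toReal) ∂ν ≤ log 2 :=
    calc _ ≤ log (1 + (q⁻¹ - 1) * q) := integral_log_one_add_mul_le hq_int hq_nonneg ha
      _ ≤ log 2 := log_le_log (by positivity) (by rw [sub_mul, inv_mul_cancel₀ hq0.ne']; linarith)
  rw [log_inv] at h_integrated
  rw [le_div_iff₀ (neg_pos.mpr (log_neg hq0 hq1))]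
  linarith
end

section
/- Improved Bretagnolle–Huber inequality for general distributions: let P and Q be probability measures on a common measurable space (Ω, F). Then for every event A ∈ F, Q(A) ≥ P(A) − 1 + exp(−1/e) · exp(−KL(P,Q)), with the convention exp(−∞) = 0 when KL(P,Q) = +∞. -/
/-!
On probability measures `KLdiv` agrees with Mathlib's `klDiv`. Split `KL(P,Q) = ∫ log (dP/dQ) dP`
over `A` and `Aᶜ`. By the log-sum inequality the part over `A` is at least `p log (p / q)`, where
`p = P(A)`, `q = Q(A)`, and the part over `Aᶜ` is at least `-1/e` because `x log (x / y) ≥ -y/e`.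
Hence `exp(-1/e) · exp(-KL(P,Q)) ≤ (q / p) ^ p`, which is at most `p · (q / p) + (1 - p)` by
weighted AM-GM.
-/

open MeasureTheory
open scoped ENNReal Classical

open Real InformationTheory

namespace Real

lemma neg_inv_exp_le_mul_log {x : ℝ} (hx : 0 ≤ x) : -(1 / exp 1) ≤ x * log x := by
  rcases hx.eq_or_lt with rfl | hx
  · simp only [log_zero, mul_zero, Left.neg_nonpos_iff]
    positivity
  · have h := log_le_sub_one_of_pos (show 0 < 1 / (exp 1 * x) by positivity)
    rw [log_div one_ne_zero (by positivity), log_mul (by positivity) hx.ne', log_one, log_exp] at h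
    have h' : x * (-log x) ≤ x * (1 / (exp 1 * x)) := mul_le_mul_of_nonneg_left (by linarith) hx.le
    rw [show x * (1 / (exp 1 * x)) = 1 / exp 1 by field_simp] at h'
    linarith

lemma neg_inv_exp_le_mul_log_div {x y : ℝ} (hx : 0 ≤ x) (hy0 : 0 ≤ y) (hy1 : y ≤ 1) :
    -(1 / exp 1) ≤ x * log (x / y) := by
  rcases hy0.eq_or_lt with rfl | hy
  · simp only [div_zero, log_zero, mul_zero, Left.neg_nonpos_iff]
    positivity
  · have h := mul_le_mul_of_nonneg_left (neg_inv_exp_le_mul_log (div_nonneg hx hy0)) hy0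
    rw [← mul_assoc, mul_div_cancel₀ x hy.ne'] at h
    have : 0 ≤ 1 / exp 1 := by positivity
    nlinarith

/-- The weighted AM-GM inequality `(q / p) ^ p * 1 ^ (1 - p) ≤ p * (q / p) + (1 - p) * 1`. -/
lemma exp_neg_mul_log_div_le {p q : ℝ} (hp0 : 0 ≤ p) (hp1 : p ≤ 1) (hq : 0 ≤ q)
    (hpq : q = 0 → p = 0) : exp (-(p * log (p / q))) ≤ 1 - p + q := by
  rcases hp0.eq_or_lt with rfl | hp
  · simpa using hq
  have hq : 0 < q := hq.lt_of_ne fun h => hp.ne' (hpq h.symm)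
  have amgm := geom_mean_le_arith_mean2_weighted hp0 (sub_nonneg.mpr hp1)
    (div_nonneg hq.le hp0) zero_le_one (add_sub_cancel p 1)
  rw [one_rpow, mul_one, mul_div_cancel₀ q hp.ne', mul_one] at amgm
  rw [← inv_div, log_inv, mul_neg, neg_neg, mul_comm, ← rpow_def_of_pos (div_pos hq hp)]
  linarith

end Real

lemma KLdiv_eq_klDiv_s16 {Ω : Type*} [MeasurableSpace Ω] {P Q : Measure Ω}
    (h : P.real Set.univ = Q.real Set.univ) : KLdiv P Q = klDiv P Q := by
  rw [KLdiv, klDiv_def, h, add_sub_cancel_right]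
  rfl

namespace MeasureTheory.Measure

variable {α : Type*} {mα : MeasurableSpace α} {μ ν : Measure α} {s : Set α}

lemma rnDeriv_restrict_restrict [μ.HaveLebesgueDecomposition ν] [SigmaFinite ν] (hμν : μ ≪ ν)
    (hs : MeasurableSet s) :
    (μ.restrict s).rnDeriv (ν.restrict s) =ᵐ[ν.restrict s] μ.rnDeriv ν := by
  have h : μ.restrict s = (ν.restrict s).withDensity (μ.rnDeriv ν) := by
    rw [← restrict_withDensity hs, withDensity_rnDeriv_eq μ ν hμν]
  rw [h]
  exact rnDeriv_withDensity _ (measurable_rnDeriv μ ν)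

end MeasureTheory.Measure

namespace InformationTheory

variable {α : Type*} {mα : MeasurableSpace α} {μ ν : Measure α} {s : Set α}

/-- The log-sum inequality, in integral form. -/
lemma mul_log_div_le_setIntegral_llr [IsFiniteMeasure μ] [IsFiniteMeasure ν] (hμν : μ ≪ ν)
    (h_int : Integrable (llr μ ν) μ) (hs : MeasurableSet s) :
    μ.real s * log (μ.real s / ν.real s) ≤ ∫ x in s, llr μ ν x ∂μ := by
  have hμν_s : μ.restrict s ≪ ν.restrict s := hμν.restrict s
  have h_llr : llr (μ.restrict s) (ν.restrict s) =ᵐ[μ.restrict s] llr μ ν := by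
    filter_upwards [hμν_s.ae_le (Measure.rnDeriv_restrict_restrict hμν hs)] with x hx
    simp only [llr_def, hx]
  have h_int_s : Integrable (llr (μ.restrict s) (ν.restrict s)) (μ.restrict s) :=
    (integrable_congr h_llr).mpr h_int.restrict
  have h := mul_log_le_toReal_klDiv hμν_s h_int_s
  rw [toReal_klDiv hμν_s h_int_s, integral_congr_ae h_llr] at h
  simp only [measureReal_restrict_apply_univ] at h
  linarith

lemma mul_log_div_sub_inv_exp_le_toReal_klDiv [IsProbabilityMeasure μ] [IsProbabilityMeasure ν]
    (hμν : μ ≪ ν) (h_int : Integrable (llr μ ν) μ) (hs : MeasurableSet s) :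
    μ.real s * log (μ.real s / ν.real s) - 1 / exp 1 ≤ (klDiv μ ν).toReal := by
  rw [toReal_klDiv_of_measure_eq hμν (by simp), ← integral_add_compl hs h_int]
  have h_compl : -(1 / exp 1) ≤ μ.real sᶜ * log (μ.real sᶜ / ν.real sᶜ) :=
    neg_inv_exp_le_mul_log_div measureReal_nonneg measureReal_nonneg measureReal_le_one
  linarith [mul_log_div_le_setIntegral_llr hμν h_int hs,
    mul_log_div_le_setIntegral_llr hμν h_int hs.compl]

end InformationTheory

/-- Improved Bretagnolle–Huber inequality for general distributions:
`Q(A) ≥ P(A) − 1 + exp(−1/e)·exp(−KL(P,Q))`, with the convention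
`exp(−∞) = 0` (encoded by the `if`) when `KL(P,Q) = +∞`. -/
theorem improved_bretagnolle_huber {Ω : Type*} [MeasurableSpace Ω]
    (P Q : Measure Ω) [IsProbabilityMeasure P] [IsProbabilityMeasure Q]
    (A : Set Ω) (hA : MeasurableSet A) :
    (Q A).toReal ≥
      (P A).toReal - 1 +
        Real.exp (-(1 / Real.exp 1)) *
          (if KLdiv P Q = ⊤ then 0 else Real.exp (-(KLdiv P Q).toReal)) := by
  change Q.real A ≥ P.real A - 1 + _
  have hP_le_one : P.real A ≤ 1 := measureReal_le_one
  split_ifs with hKL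
  · linarith [measureReal_nonneg (μ := Q) (s := A)]
  rw [KLdiv_eq_klDiv_s16 (by simp)] at hKL ⊢
  obtain ⟨hPQ, h_int⟩ := klDiv_ne_top_iff.mp hKL
  suffices exp (-(1 / exp 1)) * exp (-(klDiv P Q).toReal) ≤ 1 - P.real A + Q.real A by linarith
  have hQ_zero (h : Q.real A = 0) : P.real A = 0 :=
    (measureReal_eq_zero_iff).mpr (hPQ ((measureReal_eq_zero_iff).mp h))
  calc exp (-(1 / exp 1)) * exp (-(klDiv P Q).toReal)
      ≤ exp (-(1 / exp 1)) * exp (-(P.real A * log (P.real A / Q.real A) - 1 / exp 1)) := by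
        gcongr
        exact mul_log_div_sub_inv_exp_le_toReal_klDiv hPQ h_int hA
    _ = exp (-(P.real A * log (P.real A / Q.real A))) := by rw [← exp_add]; ring_nf
    _ ≤ 1 - P.real A + Q.real A :=
        exp_neg_mul_log_div_le measureReal_nonneg hP_le_one measureReal_nonneg hQ_zero
end
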